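/- For complex numbers q₁, …, q_n define matrices Q⁽ᵏ⁾, R⁽ᵏ⁾ of size 2^{k−1} × 2^{k−1} recursively by Q⁽¹⁾ = (q₁), R⁽¹⁾ = (conj(q₁)), and Q⁽ᵏ⁺¹⁾ = fromBlocks(Q⁽ᵏ⁾, q_{k+1} I; −conj(q_{k+1}) I, R⁽ᵏ⁾), R⁽ᵏ⁺¹⁾ = fromBlocks(R⁽ᵏ⁾, −q_{k+1} I; conj(q_{k+1}) I, Q⁽ᵏ⁾), where I is the 2^{k−1} × 2^{k−1} identity matrix. Then for every n ≥ 1: R⁽ⁿ⁾ equals the conjugate transpose of Q⁽ⁿ⁾, and Q⁽ⁿ⁾R⁽ⁿ⁾ = R⁽ⁿ⁾Q⁽ⁿ⁾ = (Σ_{i=1}^{n} |q_i|²) · I, where I is the 2^{n−1} × 2^{n−1} identity matrix. -/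

import Mathlib

open Complex Matrix

/-- The equivalence `Fin (2^k) ⊕ Fin (2^k) ≃ Fin (2^(k+1))` used to reindex block matrices. -/
def blockEquiv (k : ℕ) : Fin (2^k) ⊕ Fin (2^k) ≃ Fin (2^(k+1)) :=
  finSumFinEquiv.trans (finCongr (by ring))

/-- The pair `(Q⁽ᵏ⁺¹⁾, R⁽ᵏ⁺¹⁾)` of `2^k × 2^k` matrices built recursively from
`q 1, …, q (k+1)`:  `Q⁽¹⁾ = (q 1)`, `R⁽¹⁾ = (conj (q 1))`, and
`Q⁽ᵏ⁺¹⁾ = fromBlocks (Q⁽ᵏ⁾, q_{k+1} I; −conj (q_{k+1}) I, R⁽ᵏ⁾)`,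
`R⁽ᵏ⁺¹⁾ = fromBlocks (R⁽ᵏ⁾, −q_{k+1} I; conj (q_{k+1}) I, Q⁽ᵏ⁾)`. -/
noncomputable def QRmat (q : ℕ → ℂ) : (k : ℕ) →
    Matrix (Fin (2^k)) (Fin (2^k)) ℂ × Matrix (Fin (2^k)) (Fin (2^k)) ℂ
  | 0 => (Matrix.of fun _ _ => q 1, Matrix.of fun _ _ => starRingEnd ℂ (q 1))
  | k+1 =>
    ((Matrix.reindex (blockEquiv k) (blockEquiv k))
        (Matrix.fromBlocks (QRmat q k).1
          (q (k+2) • (1 : Matrix (Fin (2^k)) (Fin (2^k)) ℂ))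
          ((-(starRingEnd ℂ (q (k+2)))) • (1 : Matrix (Fin (2^k)) (Fin (2^k)) ℂ))
          (QRmat q k).2),
     (Matrix.reindex (blockEquiv k) (blockEquiv k))
        (Matrix.fromBlocks (QRmat q k).2
          ((-(q (k+2))) • (1 : Matrix (Fin (2^k)) (Fin (2^k)) ℂ))
          ((starRingEnd ℂ (q (k+2))) • (1 : Matrix (Fin (2^k)) (Fin (2^k)) ℂ))
          (QRmat q k).1))

/-! Both claims go by induction on `k`. The block pattern of `R⁽ᵏ⁺¹⁾` is the conjugate transpose
of that of `Q⁽ᵏ⁺¹⁾`. In the products `Q⁽ᵏ⁺¹⁾R⁽ᵏ⁺¹⁾` and `R⁽ᵏ⁺¹⁾Q⁽ᵏ⁺¹⁾` the scalar off-diagonal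
blocks commute with `Q⁽ᵏ⁾`, `R⁽ᵏ⁾` and cancel, while each diagonal block is
`Q⁽ᵏ⁾R⁽ᵏ⁾` or `R⁽ᵏ⁾Q⁽ᵏ⁾` plus `|q_{k+1}|² I`. -/

open ComplexConjugate

section Blocks

variable {l m α : Type*} [DecidableEq m] [CommRing α]

theorem fromBlocks_smul_one_mul_fromBlocks_smul_one [Fintype m] (A B : Matrix m m α) (a b : α) :
    fromBlocks A (a • 1) (b • 1) B * fromBlocks B ((-a) • 1) ((-b) • 1) A
      = fromBlocks (A * B - (a * b) • 1) 0 0 (B * A - (a * b) • 1) := by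
  rw [fromBlocks_multiply]
  congr 1 <;> simp [smul_smul, mul_comm b a, sub_eq_add_neg, add_comm]

theorem reindex_fromBlocks_smul_one [DecidableEq l] (e : m ⊕ m ≃ l) (c : α) :
    reindex e e (fromBlocks (c • 1 : Matrix m m α) 0 0 (c • 1)) = c • 1 := by
  rw [← smul_zero c, ← fromBlocks_smul, fromBlocks_one, reindex_apply]
  ext i j
  simp [one_apply]

theorem reindex_fromBlocks_smul_one_mul_of_mul_eq_smul_one [Fintype m] [Fintype l] [DecidableEq l]
    (e : m ⊕ m ≃ l) {A B : Matrix m m α} {s : α} (hAB : A * B = s • 1) (hBA : B * A = s • 1)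
    (a b : α) :
    reindex e e (fromBlocks A (a • 1) (b • 1) B) * reindex e e (fromBlocks B ((-a) • 1) ((-b) • 1) A)
      = (s - a * b) • 1 := by
  rw [reindex_apply, reindex_apply, submatrix_mul_equiv, ← reindex_apply,
    fromBlocks_smul_one_mul_fromBlocks_smul_one, hAB, hBA, ← sub_smul,
    reindex_fromBlocks_smul_one]

end Blocks

theorem QRmat_snd_eq_conjTranspose (q : ℕ → ℂ) (k : ℕ) : (QRmat q k).2 = ((QRmat q k).1)ᴴ := by
  induction k with
  | zero => ext; simp [QRmat]
  | succ k ih =>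
    simp only [QRmat, reindex_apply, conjTranspose_submatrix, fromBlocks_conjTranspose, ih,
      conjTranspose_conjTranspose, conjTranspose_smul, conjTranspose_one, star_neg,
      Complex.star_def, Complex.conj_conj]

theorem QRmat_mul_eq_sum_norm_sq (q : ℕ → ℂ) (k : ℕ) :
    (QRmat q k).1 * (QRmat q k).2 = (∑ i ∈ Finset.Icc 1 (k+1), ((‖q i‖ : ℝ) : ℂ)^2) • 1 ∧
    (QRmat q k).2 * (QRmat q k).1 = (∑ i ∈ Finset.Icc 1 (k+1), ((‖q i‖ : ℝ) : ℂ)^2) • 1 := by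
  induction k with
  | zero =>
    constructor <;> ext i j <;> obtain rfl := Subsingleton.elim (α := Fin 1) i j <;>
      simp [QRmat, mul_apply, Complex.mul_conj', mul_comm]
  | succ k ih =>
    obtain ⟨hQR, hRQ⟩ := ih
    have hQR' := reindex_fromBlocks_smul_one_mul_of_mul_eq_smul_one (blockEquiv k) hQR hRQ
      (q (k+2)) (-conj (q (k+2)))
    have hRQ' := reindex_fromBlocks_smul_one_mul_of_mul_eq_smul_one (blockEquiv k) hRQ hQR
      (-q (k+2)) (conj (q (k+2)))
    simp only [neg_neg, neg_mul, mul_neg, sub_neg_eq_add, Complex.mul_conj',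
      ← Finset.sum_Icc_succ_top (by omega : 1 ≤ k + 2)] at hQR' hRQ'
    exact ⟨hQR', hRQ'⟩

theorem QRmat_conjTranspose_and_mul (q : ℕ → ℂ) (n : ℕ) (hn : 1 ≤ n) :
    (QRmat q (n-1)).2 = ((QRmat q (n-1)).1)ᴴ ∧
    (QRmat q (n-1)).1 * (QRmat q (n-1)).2
      = (∑ i ∈ Finset.Icc 1 n, ((‖q i‖ : ℝ) : ℂ)^2)
          • (1 : Matrix (Fin (2^(n-1))) (Fin (2^(n-1))) ℂ) ∧
    (QRmat q (n-1)).2 * (QRmat q (n-1)).1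
      = (∑ i ∈ Finset.Icc 1 n, ((‖q i‖ : ℝ) : ℂ)^2)
          • (1 : Matrix (Fin (2^(n-1))) (Fin (2^(n-1))) ℂ) := by
  obtain ⟨k, rfl⟩ : ∃ k, n = k + 1 := ⟨n - 1, by omega⟩
  exact ⟨QRmat_snd_eq_conjTranspose q k, QRmat_mul_eq_sum_norm_sq q k⟩
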